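/- arXiv:2410.20460 — 4 statements merged into one kernel-verified Lean document; each statement's English description precedes it below -/
import Mathlib

section
/- For a semistandard Young tableau P, the following are equivalent: (i) every entry of the first row of P is at most u and for each i the number of entries of row i less than u equals the number of entries of row i+1 at most u; (ii) every column of P contains an entry equal to u. -/
namespace Plactic

/-- Insert `x` into a weakly increasing row, returning the new row and the bumped entry. -/
def rowInsert (x : ℕ) : List ℕ → List ℕ × Option ℕ
  | [] => ([x], none)
  | y :: ys =>
    if x < y then (x :: ys, some y)
    else
      let p := rowInsert x ys
      (y :: p.1, p.2)

/-- RSK insertion of `x` into a tableau given as a list of rows. -/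
def tInsert (x : ℕ) : List (List ℕ) → List (List ℕ)
  | [] => [[x]]
  | r :: rs =>
    match rowInsert x r with
    | (r', none) => r' :: rs
    | (r', some y) => r' :: tInsert y rs

/-- The RSK insertion tableau of a word. -/
def P (w : List ℕ) : List (List ℕ) := w.foldl (fun t x => tInsert x t) []

/-- The `i`-th row (0-indexed) of the insertion tableau of `w`. -/
def row (w : List ℕ) (i : ℕ) : List ℕ := (P w).getD i []

/-- The `j`-th column (0-indexed) of a tableau, read top to bottom. -/
def col (T : List (List ℕ)) (j : ℕ) : List ℕ := T.filterMap (fun r => r[j]?)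

/-- An elementary Knuth transposition. -/
inductive KStep : List ℕ → List ℕ → Prop
  | k1 (x y : List ℕ) (a b c : ℕ) : a ≤ b → b < c →
      KStep (x ++ [a, c, b] ++ y) (x ++ [c, a, b] ++ y)
  | k2 (x y : List ℕ) (a b c : ℕ) : a < b → b ≤ c →
      KStep (x ++ [b, a, c] ++ y) (x ++ [b, c, a] ++ y)

/-- Knuth equivalence: the equivalence relation generated by Knuth transpositions. -/
def KEquiv : List ℕ → List ℕ → Prop := Relation.EqvGen KStep

/-- The centralizer of `u` in the plactic monoid. -/
def Cent (u : List ℕ) : Set (List ℕ) := {w | KEquiv (u ++ w) (w ++ u)}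

end Plactic

/-
Read row by row, the indices `j` of the entries `< u` in row `i` and of the entries `≤ u` in
row `i + 1` are initial segments of `ℕ`, so the counting condition says these two segments
coincide. If column `j` contains `u` in row `k`, column strictness places the entries `< u`
exactly in rows `< k` and the entries `≤ u` exactly in rows `≤ k`, which makes the two
segments equal. Conversely, if they are equal, an entry `≤ u` that is not `u` is `< u` and
forces an entry `≤ u` directly below it; as the column is finite, this descent must stop at
an entry equal to `u`.
-/

open Finset

theorem Finset.eq_range_card_of_isLowerSet {s : Finset ℕ} (hs : IsLowerSet (s : Set ℕ)) :
    s = range #s := by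
  obtain h | ⟨a, h⟩ := hs.eq_univ_or_Iio
  · exact absurd (h ▸ s.finite_toSet) Set.infinite_univ
  · have hs : s = range a := by
      ext j
      rw [← mem_coe, h, Set.mem_Iio, mem_range]
    rw [hs, card_range]

theorem Finset.card_eq_card_iff_of_isLowerSet {s t : Finset ℕ} (hs : IsLowerSet (s : Set ℕ))
    (ht : IsLowerSet (t : Set ℕ)) : #s = #t ↔ s = t := by
  refine ⟨fun h => ?_, congrArg card⟩
  rw [eq_range_card_of_isLowerSet hs, eq_range_card_of_isLowerSet ht, h]

namespace SemistandardYoungTableau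

variable {μ : YoungDiagram} (T : SemistandardYoungTableau μ)

def rowLt (u i : ℕ) : Finset ℕ := (range (μ.rowLen i)).filter (fun j => T i j < u)

def rowLe (u i : ℕ) : Finset ℕ := (range (μ.rowLen i)).filter (fun j => T i j ≤ u)

theorem mem_rowLt {u i j : ℕ} : j ∈ T.rowLt u i ↔ (i, j) ∈ μ ∧ T i j < u := by
  rw [rowLt, mem_filter, mem_range, YoungDiagram.mem_iff_lt_rowLen]

theorem mem_rowLe {u i j : ℕ} : j ∈ T.rowLe u i ↔ (i, j) ∈ μ ∧ T i j ≤ u := by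
  rw [rowLe, mem_filter, mem_range, YoungDiagram.mem_iff_lt_rowLen]

theorem isLowerSet_rowLt (u i : ℕ) : IsLowerSet (T.rowLt u i : Set ℕ) := by
  intro j k hkj hj
  rw [mem_coe, mem_rowLt] at hj ⊢
  exact ⟨μ.up_left_mem le_rfl hkj hj.1, (T.row_weak_of_le hkj hj.1).trans_lt hj.2⟩

theorem isLowerSet_rowLe (u i : ℕ) : IsLowerSet (T.rowLe u i : Set ℕ) := by
  intro j k hkj hj
  rw [mem_coe, mem_rowLe] at hj ⊢
  exact ⟨μ.up_left_mem le_rfl hkj hj.1, (T.row_weak_of_le hkj hj.1).trans hj.2⟩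

section ColumnContaining

variable {T} {u j k : ℕ} (hk : (k, j) ∈ μ) (hu : T k j = u)
include hk hu

theorem mem_rowLt_iff_lt_of_eq (i : ℕ) : j ∈ T.rowLt u i ↔ i < k := by
  subst hu
  rw [mem_rowLt]
  refine ⟨fun ⟨hi, hlt⟩ => ?_, fun hik => ⟨μ.up_left_mem hik.le le_rfl hk, T.col_strict hik hk⟩⟩
  by_contra! hki
  exact (T.col_weak hki hi).not_gt hlt

theorem mem_rowLe_iff_le_of_eq (i : ℕ) : j ∈ T.rowLe u i ↔ i ≤ k := by
  subst hu
  rw [mem_rowLe]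
  refine ⟨fun ⟨hi, hle⟩ => ?_, fun hik => ⟨μ.up_left_mem hik le_rfl hk, T.col_weak hik hk⟩⟩
  by_contra! hki
  exact (T.col_strict hki hi).not_ge hle

end ColumnContaining

theorem rowLt_eq_rowLe_succ {u : ℕ} (h : ∀ j < μ.rowLen 0, ∃ k, (k, j) ∈ μ ∧ T k j = u)
    (i : ℕ) : T.rowLt u i = T.rowLe u (i + 1) := by
  ext j
  by_cases hj : j < μ.rowLen 0
  · obtain ⟨k, hk, hu⟩ := h j hj
    rw [mem_rowLt_iff_lt_of_eq hk hu, mem_rowLe_iff_le_of_eq hk hu, Nat.lt_iff_add_one_le]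
  · have hcell : ∀ i, (i, j) ∉ μ := fun i hi =>
      hj (YoungDiagram.mem_iff_lt_rowLen.mp (μ.up_left_mem (Nat.zero_le i) le_rfl hi))
    simp only [mem_rowLt, mem_rowLe, hcell, false_and]

theorem exists_eq_of_rowLt_eq_rowLe_succ {u : ℕ} (h0 : ∀ j < μ.rowLen 0, T 0 j ≤ u)
    (h : ∀ i, T.rowLt u i = T.rowLe u (i + 1)) {j : ℕ} (hj : j < μ.rowLen 0) :
    ∃ k, (k, j) ∈ μ ∧ T k j = u := by
  by_contra! hne
  have descent : ∀ i, j ∈ T.rowLe u i := by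
    intro i
    induction i with
    | zero => exact T.mem_rowLe.mpr ⟨YoungDiagram.mem_iff_lt_rowLen.mpr hj, h0 j hj⟩
    | succ i ih =>
      obtain ⟨hi, hle⟩ := T.mem_rowLe.mp ih
      rw [← h, mem_rowLt]
      exact ⟨hi, hle.lt_of_ne (hne i hi)⟩
  exact (YoungDiagram.mem_iff_lt_colLen.mp (T.mem_rowLe.mp (descent (μ.colLen j))).1).false

end SemistandardYoungTableau

open SemistandardYoungTableau in
theorem stmt_5_general (μ : YoungDiagram) (T : SemistandardYoungTableau μ) (u : ℕ) :
    ((∀ j < μ.rowLen 0, T 0 j ≤ u) ∧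
      ∀ i, ((Finset.range (μ.rowLen i)).filter (fun j => T i j < u)).card =
           ((Finset.range (μ.rowLen (i + 1))).filter (fun j => T (i + 1) j ≤ u)).card)
    ↔ (∀ j < μ.rowLen 0, ∃ i, (i, j) ∈ μ ∧ T i j = u) := by
  have hcard : ∀ i, #(T.rowLt u i) = #(T.rowLe u (i + 1)) ↔ T.rowLt u i = T.rowLe u (i + 1) :=
    fun i => card_eq_card_iff_of_isLowerSet (T.isLowerSet_rowLt u i) (T.isLowerSet_rowLe u _)
  change (_ ∧ ∀ i, #(T.rowLt u i) = #(T.rowLe u (i + 1))) ↔ _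
  simp only [hcard]
  refine ⟨fun ⟨h0, h⟩ j hj => T.exists_eq_of_rowLt_eq_rowLe_succ h0 h hj,
    fun h => ⟨fun j hj => ?_, T.rowLt_eq_rowLe_succ h⟩⟩
  obtain ⟨k, hk, hu⟩ := h j hj
  exact (T.mem_rowLe.mp ((mem_rowLe_iff_le_of_eq hk hu 0).mpr k.zero_le)).2

theorem stmt_5 (μ : YoungDiagram) (T : SemistandardYoungTableau μ) (u : ℕ) (hu : 0 < u) :
    ((∀ j < μ.rowLen 0, T 0 j ≤ u) ∧
      ∀ i, ((Finset.range (μ.rowLen i)).filter (fun j => T i j < u)).card =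
           ((Finset.range (μ.rowLen (i + 1))).filter (fun j => T (i + 1) j ≤ u)).card)
    ↔ (∀ j < μ.rowLen 0, ∃ i, (i, j) ∈ μ ∧ T i j = u) :=
  stmt_5_general μ T u
end

section
/- A word w over the positive integers lies in C(1) if and only if the first row of P(w) consists entirely of 1's. -/
/-!
Knuth moves permute letters and preserve the length of a longest weakly increasing subsequence.
Let `a` be the smallest letter of `w`. If `a w ≡ w a`, take a longest weakly increasing
subsequence `s` of `w`: then `a s` is one of length `|s| + 1` in `a w`, hence there is one in
`w a`; it must end with the final `a`, so it consists of `a`'s and `|s| ≤ #a(w)`. The first row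
of `P(w)` is weakly increasing inside the reading word of `P(w)`, which is Knuth-equivalent to
`w`, so its length is at most `|s| ≤ #a(w)`. A minimal letter is never bumped, so all `#a(w)`
copies of `a` lie in the first row, which therefore consists of `a`'s only.

Conversely, if the first row is `a ⋯ a`, then inserting `a` at the end of `w`, or at its start
(a minimal letter stays at the front of the first row), adds one `a` to the first row of `P(w)`
in both cases, and words with equal insertion tableaux are Knuth-equivalent to their common
reading word.
-/

namespace Plactic

open List

section KnuthEquivalence

variable {u v : List ℕ}

theorem KStep.kEquiv (h : KStep u v) : KEquiv u v := Relation.EqvGen.rel _ _ h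

theorem KEquiv.refl (u : List ℕ) : KEquiv u u := Relation.EqvGen.refl u

theorem KEquiv.symm (h : KEquiv u v) : KEquiv v u := Relation.EqvGen.symm _ _ h

theorem KEquiv.trans {t : List ℕ} (h : KEquiv u v) (h' : KEquiv v t) : KEquiv u t :=
  Relation.EqvGen.trans _ _ _ h h'

theorem KEquiv.map {f : List ℕ → List ℕ} (hf : ∀ {u v}, KStep u v → KStep (f u) (f v))
    (h : KEquiv u v) : KEquiv (f u) (f v) := by
  induction h with
  | rel _ _ hs => exact (hf hs).kEquiv
  | refl => exact .refl _
  | symm _ _ _ ih => exact ih.symm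
  | trans _ _ _ _ _ ih ih' => exact ih.trans ih'

theorem KStep.append_left (h : KStep u v) (z : List ℕ) : KStep (z ++ u) (z ++ v) := by
  cases h with
  | k1 x y a b c hab hbc => simpa using KStep.k1 (z ++ x) y a b c hab hbc
  | k2 x y a b c hab hbc => simpa using KStep.k2 (z ++ x) y a b c hab hbc

theorem KStep.append_right (h : KStep u v) (z : List ℕ) : KStep (u ++ z) (v ++ z) := by
  cases h with
  | k1 x y a b c hab hbc => simpa using KStep.k1 x (y ++ z) a b c hab hbc
  | k2 x y a b c hab hbc => simpa using KStep.k2 x (y ++ z) a b c hab hbc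

theorem KEquiv.append_left (h : KEquiv u v) (z : List ℕ) : KEquiv (z ++ u) (z ++ v) :=
  h.map (·.append_left z)

theorem KEquiv.append_right (h : KEquiv u v) (z : List ℕ) : KEquiv (u ++ z) (v ++ z) :=
  h.map (·.append_right z)

theorem KEquiv.cons (h : KEquiv u v) (a : ℕ) : KEquiv (a :: u) (a :: v) :=
  h.append_left [a]

theorem KStep.perm (h : KStep u v) : u ~ v := by
  cases h with
  | k1 x y a b c => exact ((Perm.swap c a [b]).append_left x).append_right y
  | k2 x y a b c => exact (((Perm.swap c a []).cons b).append_left x).append_right y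

theorem KEquiv.perm (h : KEquiv u v) : u ~ v := by
  induction h with
  | rel _ _ hs => exact hs.perm
  | refl => exact .refl _
  | symm _ _ _ ih => exact ih.symm
  | trans _ _ _ _ _ ih ih' => exact ih.trans ih'

end KnuthEquivalence

section SortedSublists

def HasSortedSublist (n : ℕ) (u : List ℕ) : Prop :=
  ∃ s, s <+ u ∧ s.Pairwise (· ≤ ·) ∧ s.length = n

/-- `s'` may take the place of `s` in the middle of any weakly increasing sequence. -/
def SortedReplacement (s s' : List ℕ) : Prop :=
  s'.Pairwise (· ≤ ·) ∧ s'.length = s.length ∧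
    (∀ v ∈ s', ∃ p ∈ s, p ≤ v) ∧ (∀ v ∈ s', ∃ q ∈ s, v ≤ q)

theorem SortedReplacement.refl {s : List ℕ} (hs : s.Pairwise (· ≤ ·)) : SortedReplacement s s :=
  ⟨hs, rfl, fun v hv => ⟨v, hv, le_rfl⟩, fun v hv => ⟨v, hv, le_rfl⟩⟩

theorem HasSortedSublist.of_replace {m m' : List ℕ}
    (hm : ∀ s, s <+ m → s.Pairwise (· ≤ ·) → ∃ s', s' <+ m' ∧ SortedReplacement s s')
    {n : ℕ} {x y : List ℕ} (h : HasSortedSublist n (x ++ m ++ y)) :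
    HasSortedSublist n (x ++ m' ++ y) := by
  obtain ⟨s, hsub, hsort, rfl⟩ := h
  rw [append_assoc, sublist_append_iff] at hsub
  obtain ⟨s₁, s₂₃, rfl, h₁, h₂₃⟩ := hsub
  obtain ⟨s₂, s₃, rfl, h₂, h₃⟩ := sublist_append_iff.1 h₂₃
  rw [pairwise_append, pairwise_append] at hsort
  obtain ⟨hp₁, ⟨hp₂, hp₃, h₂₃'⟩, h₁₂₃⟩ := hsort
  obtain ⟨s', hs', hp', hlen, hlow, hhigh⟩ := hm s₂ h₂ hp₂
  refine ⟨s₁ ++ (s' ++ s₃), ?_, ?_, by simp [hlen]⟩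
  · rw [append_assoc]
    exact h₁.append (hs'.append h₃)
  rw [pairwise_append, pairwise_append]
  refine ⟨hp₁, ⟨hp', hp₃, fun v hv b hb => ?_⟩, fun a ha v hv => ?_⟩
  · obtain ⟨q, hq, hvq⟩ := hhigh v hv
    exact hvq.trans (h₂₃' q hq b hb)
  rcases mem_append.1 hv with hv | hv
  · obtain ⟨p, hp, hpv⟩ := hlow v hv
    exact (h₁₂₃ a ha p (mem_append_left _ hp)).trans hpv
  · exact h₁₂₃ a ha v (mem_append_right _ hv)

variable {u v w : List ℕ} {n : ℕ}

/- Both sides of a Knuth move have the same weakly increasing subwords, except `[a, c]` in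
`[a, c, b]` and in `[b, a, c]`, which is traded for `[a, b]` and `[b, c]` respectively. -/
theorem KStep.hasSortedSublist_iff (h : KStep u v) :
    HasSortedSublist n u ↔ HasSortedSublist n v := by
  rcases h with ⟨x, y, a, b, c, hab, hbc⟩ | ⟨x, y, a, b, c, hab, hbc⟩ <;> constructor <;>
    refine HasSortedSublist.of_replace (fun s hs hsort => ?_) <;>
    obtain rfl | rfl | rfl | rfl | rfl | rfl | rfl | rfl := by
      simpa [sublists] using mem_sublists.2 hs
  all_goals first
    | (simp at hsort; omega)
    | exact ⟨_, by simp, .refl hsort⟩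
    | exact ⟨[a, b], by simp, by simp [SortedReplacement]; omega⟩
    | exact ⟨[b, c], by simp, by simp [SortedReplacement]; omega⟩

theorem KEquiv.hasSortedSublist_iff (h : KEquiv u v) :
    HasSortedSublist n u ↔ HasSortedSublist n v := by
  induction h with
  | rel _ _ hs => exact hs.hasSortedSublist_iff
  | refl => rfl
  | symm _ _ _ ih => exact ih.symm
  | trans _ _ _ _ _ ih ih' => exact ih.trans ih'

theorem exists_longest_sortedSublist (w : List ℕ) :
    ∃ s, s <+ w ∧ s.Pairwise (· ≤ ·) ∧ ∀ n, HasSortedSublist n w → n ≤ s.length := by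
  classical
  have hle : ∀ n, HasSortedSublist n w → n ≤ w.length := by
    rintro _ ⟨s, hs, -, rfl⟩
    exact hs.length_le
  obtain ⟨s, hs, hsort, hlen⟩ :=
    Nat.findGreatest_spec (P := (HasSortedSublist · w)) (Nat.zero_le _)
      ⟨[], nil_sublist w, .nil, rfl⟩
  exact ⟨s, hs, hsort, fun n hn => hlen ▸ Nat.le_findGreatest (hle n hn) hn⟩

theorem HasSortedSublist.cons {a : ℕ} (h : HasSortedSublist n w) (hw : ∀ x ∈ w, a ≤ x) :
    HasSortedSublist (n + 1) (a :: w) := by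
  obtain ⟨s, hs, hsort, rfl⟩ := h
  exact ⟨a :: s, hs.cons_cons a, pairwise_cons.2 ⟨fun x hx => hw x (hs.subset hx), hsort⟩, rfl⟩

theorem HasSortedSublist.of_append_singleton {a : ℕ} (h : HasSortedSublist (n + 1) (w ++ [a]))
    (hw : ∀ x ∈ w, a ≤ x) : HasSortedSublist (n + 1) w ∨ n ≤ w.count a := by
  obtain ⟨s, hs, hsort, hlen⟩ := h
  obtain ⟨s₁, s₂, rfl, h₁, h₂⟩ := sublist_append_iff.1 hs
  rcases sublist_singleton.1 h₂ with rfl | rfl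
  · exact .inl ⟨s₁, h₁, by simpa using hsort, by simpa using hlen⟩
  · have hs₁ : s₁.count a = s₁.length := count_eq_length.2 fun x hx =>
      le_antisymm (hw x (h₁.subset hx)) ((pairwise_append.1 hsort).2.2 x hx a mem_cons_self)
    have := h₁.count_le a
    simp only [length_append, length_singleton] at hlen
    exact .inr (by omega)

end SortedSublists

section RowInsertion

variable {x y : ℕ} {r : List ℕ}

theorem rowInsert_cons_of_lt {z : ℕ} (zs : List ℕ) (h : x < z) :
    rowInsert x (z :: zs) = (x :: zs, some z) := by
  simp [rowInsert, h]

theorem rowInsert_cons_of_le {z : ℕ} (zs : List ℕ) (h : z ≤ x) :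
    rowInsert x (z :: zs) = (z :: (rowInsert x zs).1, (rowInsert x zs).2) := by
  simp [rowInsert, not_lt.2 h]

theorem mem_rowInsert {e : ℕ} (h : e ∈ (rowInsert x r).1) : e = x ∨ e ∈ r := by
  induction r with
  | nil => simpa [rowInsert] using h
  | cons z zs ih =>
    rcases lt_or_ge x z with hxz | hzx
    · simp only [rowInsert_cons_of_lt _ hxz, mem_cons] at h ⊢
      tauto
    · simp only [rowInsert_cons_of_le _ hzx, mem_cons] at h ⊢
      rcases h with h | h
      · exact .inr (.inl h)
      · exact (ih h).imp_right .inr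

theorem rowInsert_sorted (hr : r.Pairwise (· ≤ ·)) : (rowInsert x r).1.Pairwise (· ≤ ·) := by
  induction r with
  | nil => simp [rowInsert]
  | cons z zs ih =>
    rw [pairwise_cons] at hr
    rcases lt_or_ge x z with hxz | hzx
    · rw [rowInsert_cons_of_lt _ hxz]
      exact pairwise_cons.2 ⟨fun b hb => hxz.le.trans (hr.1 b hb), hr.2⟩
    · rw [rowInsert_cons_of_le _ hzx]
      refine pairwise_cons.2 ⟨fun b hb => ?_, ih hr.2⟩
      rcases mem_rowInsert hb with rfl | hb
      exacts [hzx, hr.1 b hb]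

theorem rowInsert_of_none (h : (rowInsert x r).2 = none) : (rowInsert x r).1 = r ++ [x] := by
  induction r with
  | nil => rfl
  | cons z zs ih =>
    rcases lt_or_ge x z with hxz | hzx
    · simp [rowInsert_cons_of_lt _ hxz] at h
    · rw [rowInsert_cons_of_le _ hzx] at h ⊢
      simp [ih h]

theorem rowInsert_of_some (h : (rowInsert x r).2 = some y) :
    x < y ∧ ∃ z zs, (rowInsert x r).1 = z :: zs ∧ z ≤ x := by
  induction r with
  | nil => simp [rowInsert] at h
  | cons z zs ih =>
    rcases lt_or_ge x z with hxz | hzx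
    · rw [rowInsert_cons_of_lt _ hxz] at h ⊢
      obtain rfl := Option.some.inj h
      exact ⟨hxz, x, zs, rfl, le_rfl⟩
    · rw [rowInsert_cons_of_le _ hzx] at h ⊢
      exact ⟨(ih h).1, z, _, rfl, hzx⟩

theorem rowInsert_of_forall_le (h : ∀ z ∈ r, z ≤ x) : rowInsert x r = (r ++ [x], none) := by
  induction r with
  | nil => rfl
  | cons z zs ih =>
    rw [forall_mem_cons] at h
    rw [rowInsert_cons_of_le _ h.1, ih h.2]
    rfl

theorem kEquiv_cons_cons_append {z : ℕ} {t : List ℕ} (ht : (z :: t).Pairwise (· ≤ ·))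
    (hxz : x < z) : KEquiv (z :: x :: t) (z :: t ++ [x]) := by
  induction t generalizing z with
  | nil => exact .refl _
  | cons d t ih =>
    have hzd : z ≤ d := rel_of_pairwise_cons ht mem_cons_self
    have step : KStep (z :: x :: d :: t) (z :: d :: x :: t) := by
      simpa using KStep.k2 [] t x z d hxz hzd
    exact step.kEquiv.trans ((ih ht.of_cons (hxz.trans_le hzd)).cons z)

theorem kEquiv_bump (hr : r.Pairwise (· ≤ ·)) (h : (rowInsert x r).2 = some y) :
    KEquiv (y :: (rowInsert x r).1) (r ++ [x]) := by
  induction r with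
  | nil => simp [rowInsert] at h
  | cons z t ih =>
    rcases lt_or_ge x z with hxz | hzx
    · rw [rowInsert_cons_of_lt _ hxz] at h ⊢
      obtain rfl := Option.some.inj h
      exact kEquiv_cons_cons_append hr hxz
    · rw [rowInsert_cons_of_le _ hzx] at h ⊢
      obtain ⟨hxy, h₀, t₀, ht₀, hh₀⟩ := rowInsert_of_some h
      have hzh₀ : z ≤ h₀ := by
        rcases mem_rowInsert (ht₀ ▸ mem_cons_self : h₀ ∈ (rowInsert x t).1) with rfl | hh
        exacts [hzx, rel_of_pairwise_cons hr hh]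
      have step : KStep (z :: y :: h₀ :: t₀) (y :: z :: h₀ :: t₀) := by
        simpa using KStep.k1 [] t₀ z h₀ y hzh₀ (hh₀.trans_lt hxy)
      have ih' := (ih hr.of_cons h).cons z
      rw [ht₀] at ih' ⊢
      exact step.kEquiv.symm.trans ih'

end RowInsertion

section Tableaux

variable {x y : ℕ} {r : List ℕ} {rs T : List (List ℕ)}

theorem tInsert_cons :
    tInsert x (r :: rs) = (rowInsert x r).1 :: (rowInsert x r).2.elim rs (tInsert · rs) := by
  rw [tInsert]
  rcases rowInsert x r with ⟨r', _ | y⟩ <;> rfl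

theorem tInsert_cons_of_none (h : (rowInsert x r).2 = none) :
    tInsert x (r :: rs) = (rowInsert x r).1 :: rs := by
  rw [tInsert_cons, h]
  rfl

theorem tInsert_cons_of_some (h : (rowInsert x r).2 = some y) :
    tInsert x (r :: rs) = (rowInsert x r).1 :: tInsert y rs := by
  rw [tInsert_cons, h]
  rfl

def read (T : List (List ℕ)) : List ℕ := T.reverse.flatten

theorem read_cons : read (r :: rs) = read rs ++ r := by
  simp [read]

theorem read_eq_read_tail_append_headD (T : List (List ℕ)) :
    read T = read T.tail ++ T.headD [] := by
  cases T <;> simp [read]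

def RowsSorted (T : List (List ℕ)) : Prop := ∀ r ∈ T, r.Pairwise (· ≤ ·)

theorem RowsSorted.tInsert (hT : RowsSorted T) (x : ℕ) : RowsSorted (tInsert x T) := by
  induction T generalizing x with
  | nil => simp [RowsSorted, Plactic.tInsert]
  | cons r rs ih =>
    rw [RowsSorted, forall_mem_cons] at hT
    cases h : (rowInsert x r).2 with
    | none =>
      rw [tInsert_cons_of_none h]
      exact forall_mem_cons.2 ⟨rowInsert_sorted hT.1, hT.2⟩
    | some y =>
      rw [tInsert_cons_of_some h]
      exact forall_mem_cons.2 ⟨rowInsert_sorted hT.1, ih hT.2 y⟩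

theorem kEquiv_read_tInsert (hT : RowsSorted T) (x : ℕ) :
    KEquiv (read (tInsert x T)) (read T ++ [x]) := by
  induction T generalizing x with
  | nil => exact .refl _
  | cons r rs ih =>
    rw [RowsSorted, forall_mem_cons] at hT
    cases h : (rowInsert x r).2 with
    | none =>
      rw [tInsert_cons_of_none h, rowInsert_of_none h, read_cons, read_cons, append_assoc]
      exact .refl _
    | some y =>
      rw [tInsert_cons_of_some h, read_cons, read_cons, append_assoc]
      have hlower := (ih hT.2 y).append_right (rowInsert x r).1
      rw [append_assoc, singleton_append] at hlower
      exact hlower.trans ((kEquiv_bump hT.1 h).append_left (read rs))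

@[simp]
theorem P_append_singleton (w : List ℕ) (x : ℕ) : P (w ++ [x]) = tInsert x (P w) := by
  simp [P]

theorem rowsSorted_P (w : List ℕ) : RowsSorted (P w) := by
  induction w using List.reverseRecOn with
  | nil => simp [RowsSorted, P]
  | append_singleton w x ih =>
    rw [P_append_singleton]
    exact ih.tInsert x

theorem kEquiv_read_P (w : List ℕ) : KEquiv (read (P w)) w := by
  induction w using List.reverseRecOn with
  | nil => exact .refl _
  | append_singleton w x ih =>
    rw [P_append_singleton]
    exact (kEquiv_read_tInsert (rowsSorted_P w) x).trans (ih.append_right [x])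

theorem KEquiv.of_P_eq {u v : List ℕ} (h : P u = P v) : KEquiv u v :=
  (kEquiv_read_P u).symm.trans (h ▸ kEquiv_read_P v)

theorem hasSortedSublist_length_headD_P (w : List ℕ) :
    HasSortedSublist ((P w).headD []).length w := by
  have hsorted : ((P w).headD []).Pairwise (· ≤ ·) := by
    cases h : P w with
    | nil => exact .nil
    | cons r rs => exact rowsSorted_P w r (h ▸ mem_cons_self)
  refine (kEquiv_read_P w).hasSortedSublist_iff.1 ⟨_, ?_, hsorted, rfl⟩
  rw [read_eq_read_tail_append_headD]
  exact sublist_append_right _ _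

end Tableaux

section MinimalLetter

variable {a x : ℕ} {w : List ℕ} {T : List (List ℕ)}

def consFirstRow (a : ℕ) : List (List ℕ) → List (List ℕ)
  | [] => [[a]]
  | r :: rs => (a :: r) :: rs

theorem tInsert_consFirstRow (hax : a ≤ x) (T : List (List ℕ)) :
    tInsert x (consFirstRow a T) = consFirstRow a (tInsert x T) := by
  cases T with
  | nil => simp [consFirstRow, tInsert, rowInsert, not_lt.2 hax]
  | cons r rs => rw [consFirstRow, tInsert_cons, tInsert_cons, rowInsert_cons_of_le _ hax]; rfl

theorem P_cons_of_forall_le (hw : ∀ x ∈ w, a ≤ x) : P (a :: w) = consFirstRow a (P w) := by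
  induction w using List.reverseRecOn with
  | nil => rfl
  | append_singleton w x ih =>
    rw [forall_mem_append, forall_mem_singleton] at hw
    rw [← cons_append, P_append_singleton, P_append_singleton, ih hw.1, tInsert_consFirstRow hw.2]

theorem tInsert_eq_consFirstRow (h : ∀ x ∈ T.headD [], x = a) :
    tInsert a T = consFirstRow a T := by
  cases T with
  | nil => rfl
  | cons r rs =>
    replace h : ∀ x ∈ r, x = a := h
    rw [tInsert_cons, rowInsert_of_forall_le fun z hz => (h z hz).le, eq_replicate_of_mem h,
      ← replicate_succ', replicate_succ]
    rfl

theorem not_mem_read_tail_tInsert (hT : RowsSorted T) (hax : a ≤ x) (ha : a ∉ read T.tail) :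
    a ∉ read (tInsert x T).tail := by
  cases T with
  | nil => simp [tInsert, read]
  | cons r rs =>
    rw [RowsSorted, forall_mem_cons] at hT
    cases h : (rowInsert x r).2 with
    | none => rwa [tInsert_cons_of_none h]
    | some y =>
      have hay : a ≠ y := (hax.trans_lt (rowInsert_of_some h).1).ne
      rw [tInsert_cons_of_some h, tail_cons, (kEquiv_read_tInsert hT.2 y).perm.mem_iff]
      simpa [hay] using ha

theorem not_mem_read_tail_P (hw : ∀ x ∈ w, a ≤ x) : a ∉ read (P w).tail := by
  induction w using List.reverseRecOn with
  | nil => simp [read, P]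
  | append_singleton w x ih =>
    rw [forall_mem_append, forall_mem_singleton] at hw
    rw [P_append_singleton]
    exact not_mem_read_tail_tInsert (rowsSorted_P w) hw.2 (ih hw.1)

theorem count_headD_P (hw : ∀ x ∈ w, a ≤ x) : ((P w).headD []).count a = w.count a := by
  rw [← (kEquiv_read_P w).perm.count_eq, read_eq_read_tail_append_headD, count_append,
    count_eq_zero_of_not_mem (not_mem_read_tail_P hw), zero_add]

theorem length_le_count_of_kEquiv (h : KEquiv (a :: w) (w ++ [a])) (hw : ∀ x ∈ w, a ≤ x)
    {n : ℕ} (hn : HasSortedSublist n w) : n ≤ w.count a := by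
  obtain ⟨s, hs, hsort, hmax⟩ := exists_longest_sortedSublist w
  have hlong : HasSortedSublist (s.length + 1) (w ++ [a]) :=
    h.hasSortedSublist_iff.1 (HasSortedSublist.cons ⟨s, hs, hsort, rfl⟩ hw)
  rcases hlong.of_append_singleton hw with hlong | hcount
  · exact absurd (hmax _ hlong) (by omega)
  · exact (hmax n hn).trans hcount

theorem kEquiv_cons_append_singleton_iff (hw : ∀ x ∈ w, a ≤ x) :
    KEquiv (a :: w) (w ++ [a]) ↔ ∀ x ∈ (P w).headD [], x = a := by
  constructor
  · intro h
    have hle := length_le_count_of_kEquiv h hw (hasSortedSublist_length_headD_P w)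
    rw [← count_headD_P hw] at hle
    exact fun x hx => (count_eq_length.1 (count_le_length.antisymm hle) x hx).symm
  · intro h
    refine KEquiv.of_P_eq ?_
    rw [P_cons_of_forall_le hw, P_append_singleton, tInsert_eq_consFirstRow h]

end MinimalLetter

end Plactic

open Plactic in
theorem stmt_6 (w : List ℕ) (hw : ∀ x ∈ w, 0 < x) :
    w ∈ Cent [1] ↔ ∀ x ∈ row w 0, x = 1 := by
  have hrow : row w 0 = (P w).headD [] := by
    rw [row]
    cases P w <;> rfl
  rw [hrow]
  exact kEquiv_cons_append_singleton_iff hw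
end

section
/- The restriction of the Bender-Knuth involution interchanging u and u+1 gives a shape-preserving bijection between the set of semistandard Young tableaux with entries at most m having a u in every column and the set of semistandard Young tableaux with entries at most m having a u+1 in every column, for any 1 ≤ u < m. -/
namespace Plactic

/-- A list of rows is a semistandard Young tableau: nonempty weakly increasing rows of
weakly decreasing lengths, with strictly increasing columns. -/
def IsSSYT (T : List (List ℕ)) : Prop :=
  (∀ r ∈ T, List.Pairwise (· ≤ ·) r) ∧
  (∀ i, (T.getD (i + 1) []).length ≤ (T.getD i []).length) ∧
  (∀ (i j : ℕ) (x y : ℕ), (T.getD i [])[j]? = some x → (T.getD (i + 1) [])[j]? = some y → x < y) ∧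
  (∀ r ∈ T, r ≠ [])

/-- The Bender-Knuth move on a single row `R` with the rows `above` and `below` it:
`u`'s with a `u+1` directly below and `u+1`'s with a `u` directly above are fixed,
and the multiplicities of the remaining free `u`'s and `u+1`'s are interchanged. -/
def bkRow (u : ℕ) (above below R : List ℕ) : List ℕ :=
  let A := R.filter (fun x => decide (x < u))
  let B := R.filter (fun x => decide (u + 1 < x))
  let p := R.count u
  let q := R.count (u + 1)
  let t := ((List.range R.length).filter
      (fun j => decide (R[j]? = some u ∧ below[j]? = some (u + 1)))).length
  let s := ((List.range R.length).filter
      (fun j => decide (R[j]? = some (u + 1) ∧ above[j]? = some u))).length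
  A ++ List.replicate (t + (q - s)) u ++ List.replicate ((p - t) + s) (u + 1) ++ B

/-- The Bender-Knuth involution interchanging `u` and `u+1`, applied row by row. -/
def bk (u : ℕ) (T : List (List ℕ)) : List (List ℕ) :=
  (List.range T.length).map (fun i =>
    bkRow u (if i = 0 then [] else T.getD (i - 1) []) (T.getD (i + 1) []) (T.getD i []))

/-- Semistandard Young tableaux with positive entries at most `m` and an `a` in
every column. -/
def ColSet (m a : ℕ) : Set (List (List ℕ)) :=
  {T | IsSSYT T ∧ (∀ r ∈ T, ∀ x ∈ r, 1 ≤ x ∧ x ≤ m) ∧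
    ∀ j < (T.getD 0 []).length, a ∈ col T j}

end Plactic

/-!
Record a weakly increasing row by its counts `L v = #{entries < v}` (`countLT T i v` for row
`i` of `T`). A row is determined by these counts, and a row `S` may stand directly below a
row `R` iff `L_S (v + 1) ≤ L_R v` for all `v`. Write `a i`, `b i`, `c i` for the counts of
row `i` at `u`, `u + 1`, `u + 2`. The free entries of row `i` fill the columns from
`max (a i) (c (i+1))` to `min (c i) (a (i-1))` (with `a (-1) = ∞`), so the Bender-Knuth move
changes only `b i`, into `max (a i) (c (i+1)) + (min (c i) (a (i-1)) - b i)`.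

If every column contains a `u`, every `u + 1` sits directly below a `u`; hence
`c (i+1) = b (i+1)` or `b (i+1) = a i`, and the new count is `a i + (c (i+1) - b (i+1))`:
row `i` keeps exactly the `u`'s that have a `u + 1` below them. Dually, if every column
contains a `u + 1`, every `u` sits directly above a `u + 1`, and the new count is
`c i - (b (i-1) - a (i-1))`. Semistandardness, the column conditions and the fact that the
two moves undo each other are then linear inequalities between these counts.
-/

namespace Plactic

section Rows

variable {R S : List ℕ}

lemma lt_iff_lt_countP (hR : R.Pairwise (· ≤ ·)) {j x : ℕ} (hx : R[j]? = some x) (v : ℕ) :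
    x < v ↔ j < R.countP (· < v) := by
  induction R generalizing j with
  | nil => simp at hx
  | cons y R ih =>
    obtain ⟨hy, hR⟩ := List.pairwise_cons.1 hR
    by_cases hyv : y < v
    · cases j with
      | zero => simp_all
      | succ j =>
        rw [List.getElem?_cons_succ] at hx
        simp [hyv, ih hR hx]
    · have hR0 : R.countP (· < v) = 0 :=
        List.countP_eq_zero.2 fun z hz => by simpa using (hyv <| lt_of_le_of_lt (hy z hz) ·)
      have hyx : y ≤ x := by
        cases j with
        | zero => simp_all
        | succ j => exact hy x (List.mem_of_getElem? (by simpa using hx))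
      rw [List.countP_cons_of_neg (by simpa using hyv), hR0]
      constructor <;> intro <;> omega

lemma getElem?_eq_some_iff_countP (hR : R.Pairwise (· ≤ ·)) {j v : ℕ} :
    R[j]? = some v ↔ R.countP (· < v) ≤ j ∧ j < R.countP (· < v + 1) := by
  constructor
  · intro h
    have h1 := lt_iff_lt_countP hR h v
    have h2 := lt_iff_lt_countP hR h (v + 1)
    omega
  · rintro ⟨h1, h2⟩
    obtain ⟨x, hx⟩ : ∃ x, R[j]? = some x :=
      ⟨_, List.getElem?_eq_getElem (lt_of_lt_of_le h2 (List.countP_le_length))⟩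
    have e1 := lt_iff_lt_countP hR hx v
    have e2 := lt_iff_lt_countP hR hx (v + 1)
    rw [hx]
    congr 1
    omega

lemma eq_of_countP_lt_eq (hR : R.Pairwise (· ≤ ·)) (hS : S.Pairwise (· ≤ ·))
    (h : ∀ v, R.countP (· < v) = S.countP (· < v)) : R = S :=
  List.ext_getElem? fun _ => Option.ext fun _ => by
    rw [getElem?_eq_some_iff_countP hR, getElem?_eq_some_iff_countP hS, h, h]

lemma countP_lt_succ_le_of_getElem?_lt (hR : R.Pairwise (· ≤ ·)) (hS : S.Pairwise (· ≤ ·))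
    (hlen : S.length ≤ R.length)
    (h : ∀ (j x y : ℕ), R[j]? = some x → S[j]? = some y → x < y) (v : ℕ) :
    S.countP (· < v + 1) ≤ R.countP (· < v) := by
  by_contra! hlt
  set j := R.countP (· < v)
  have hjS : j < S.length := lt_of_lt_of_le hlt List.countP_le_length
  obtain ⟨y, hy⟩ : ∃ y, S[j]? = some y := ⟨_, List.getElem?_eq_getElem hjS⟩
  obtain ⟨x, hx⟩ : ∃ x, R[j]? = some x := ⟨_, List.getElem?_eq_getElem (by omega)⟩
  have := h j x y hx hy
  have := (lt_iff_lt_countP hS hy (v + 1)).2 hlt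
  have := (lt_iff_lt_countP hR hx v).not.2 (lt_irrefl j)
  omega

lemma lt_of_countP_lt_succ_le (hR : R.Pairwise (· ≤ ·)) (hS : S.Pairwise (· ≤ ·))
    (h : ∀ v, S.countP (· < v + 1) ≤ R.countP (· < v)) {j x y : ℕ}
    (hx : R[j]? = some x) (hy : S[j]? = some y) : x < y :=
  (lt_iff_lt_countP hR hx y).2 <|
    lt_of_lt_of_le ((lt_iff_lt_countP hS hy (y + 1)).1 (Nat.lt_succ_self y)) (h y)

lemma countP_lt_succ (v : ℕ) (R : List ℕ) :
    R.countP (· < v + 1) = R.countP (· < v) + R.count v := by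
  induction R with
  | nil => simp
  | cons x R ih =>
    simp only [List.countP_cons, List.count_cons, ih, beq_iff_eq, decide_eq_true_eq]
    split_ifs <;> omega

lemma countP_range_Ico (lo hi n : ℕ) :
    (List.range n).countP (fun j => decide (lo ≤ j ∧ j < hi)) = min hi n - lo := by
  induction n with
  | zero => simp
  | succ n ih =>
    rw [List.range_succ, List.countP_append, ih]
    simp only [List.countP_singleton, decide_eq_true_eq]
    split_ifs <;> omega

lemma length_filter_getElem?_eq_some (hR : R.Pairwise (· ≤ ·)) (hS : S.Pairwise (· ≤ ·))
    (x y : ℕ) :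
    ((List.range R.length).filter (fun j => decide (R[j]? = some x ∧ S[j]? = some y))).length =
      min (R.countP (· < x + 1)) (S.countP (· < y + 1)) -
        max (R.countP (· < x)) (S.countP (· < y)) := by
  rw [← List.countP_eq_length_filter]
  simp_rw [getElem?_eq_some_iff_countP hR, getElem?_eq_some_iff_countP hS]
  rw [List.countP_congr (q := fun j => decide (max (R.countP (· < x)) (S.countP (· < y)) ≤ j ∧
      j < min (R.countP (· < x + 1)) (S.countP (· < y + 1))))
      fun _ _ => by simp only [decide_eq_true_eq]; omega,
    countP_range_Ico]
  have := R.countP_le_length (p := (· < x + 1))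
  omega

lemma countP_lt_filter_split (u v : ℕ) (R : List ℕ) :
    (R.filter (· < u)).countP (· < v) + (if u < v then R.count u else 0) +
      (if u + 1 < v then R.count (u + 1) else 0) + (R.filter (u + 1 < ·)).countP (· < v) =
      R.countP (· < v) := by
  induction R with
  | nil => simp
  | cons x R ih =>
    simp only [List.filter_cons, List.count_cons, List.countP_cons]
    grind

lemma length_filter_split (u : ℕ) (R : List ℕ) :
    (R.filter (· < u)).length + R.count u + R.count (u + 1) + (R.filter (u + 1 < ·)).length =
      R.length := by
  induction R with
  | nil => simp
  | cons x R ih =>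
    simp only [List.filter_cons, List.count_cons]
    grind

end Rows

section BkRow

variable {u : ℕ} {above below R : List ℕ}

lemma countP_lt_resplit {k l : ℕ} (hkl : k + l = R.count u + R.count (u + 1)) (v : ℕ) :
    (R.filter (· < u) ++ List.replicate k u ++ List.replicate l (u + 1) ++
        R.filter (u + 1 < ·)).countP (· < v) =
      if v = u + 1 then R.countP (· < u) + k else R.countP (· < v) := by
  have hsplit := countP_lt_filter_split u v R
  have hsplit_u := countP_lt_filter_split u u R
  have hlow : (R.filter (· < u)).countP (· < u + 1) = (R.filter (· < u)).countP (· < u) :=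
    List.countP_congr fun x hx => by
      simp only [List.mem_filter, decide_eq_true_eq] at hx ⊢
      omega
  have hhigh : ∀ w ≤ u + 1, (R.filter (u + 1 < ·)).countP (· < w) = 0 := fun w hw =>
    List.countP_eq_zero.2 fun x hx => by
      simp only [List.mem_filter, decide_eq_true_eq] at hx ⊢
      omega
  simp only [List.countP_append, List.countP_replicate, decide_eq_true_eq] at hsplit hsplit_u ⊢
  rcases lt_trichotomy v (u + 1) with hv | rfl | hv
  · have h1 : ¬ u < v := by omega
    have h2 : ¬ u + 1 < v := by omega
    simp only [h1, h2, hv.ne, if_false] at hsplit ⊢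
    omega
  · rw [if_pos rfl, if_pos (by omega), if_neg (by omega), hlow, hhigh _ le_rfl]
    rw [if_neg (by omega), if_neg (by omega), hhigh _ (by omega)] at hsplit_u
    omega
  · have h1 : u < v := by omega
    simp only [h1, hv, hv.ne', if_true, if_false] at hsplit ⊢
    omega

lemma pairwise_bkRow (hR : R.Pairwise (· ≤ ·)) :
    (bkRow u above below R).Pairwise (· ≤ ·) := by
  simp only [bkRow, List.pairwise_append, List.mem_append, List.mem_replicate, List.mem_filter,
    decide_eq_true_eq]
  refine ⟨⟨⟨hR.filter _, List.pairwise_replicate.2 (Or.inr le_rfl), ?_⟩,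
    List.pairwise_replicate.2 (Or.inr le_rfl), ?_⟩, hR.filter _, ?_⟩ <;> intros <;> omega

lemma mem_bkRow {x : ℕ} (hx : x ∈ bkRow u above below R) : x ∈ R ∨ x = u ∨ x = u + 1 := by
  simp only [bkRow, List.mem_append, List.mem_replicate, List.mem_filter] at hx
  tauto

/-- The two `min - max` terms count the `u`'s of `R` with a `u + 1` below them and the
`u + 1`'s of `R` with a `u` above them. -/
lemma countP_lt_bkRow (hR : R.Pairwise (· ≤ ·)) (hA : above.Pairwise (· ≤ ·))
    (hB : below.Pairwise (· ≤ ·)) (v : ℕ) :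
    (bkRow u above below R).countP (· < v) =
      if v = u + 1 then
        R.countP (· < u) + (min (R.countP (· < u + 1)) (below.countP (· < u + 2)) -
            max (R.countP (· < u)) (below.countP (· < u + 1))) +
          (R.countP (· < u + 2) - R.countP (· < u + 1) -
            (min (R.countP (· < u + 2)) (above.countP (· < u + 1)) -
              max (R.countP (· < u + 1)) (above.countP (· < u))))
      else R.countP (· < v) := by
  have ht := length_filter_getElem?_eq_some hR hB u (u + 1)
  have hs := length_filter_getElem?_eq_some hR hA (u + 1) u
  have hp := countP_lt_succ u R
  have hq := countP_lt_succ (u + 1) R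
  rw [show u + 1 + 1 = u + 2 from rfl] at ht hs hq
  simp only [bkRow, ht, hs]
  rw [countP_lt_resplit (by omega)]
  split_ifs <;> omega

lemma length_bkRow (hR : R.Pairwise (· ≤ ·)) (hA : above.Pairwise (· ≤ ·))
    (hB : below.Pairwise (· ≤ ·)) :
    (bkRow u above below R).length = R.length := by
  have ht := length_filter_getElem?_eq_some hR hB u (u + 1)
  have hs := length_filter_getElem?_eq_some hR hA (u + 1) u
  have hp := countP_lt_succ u R
  have hq := countP_lt_succ (u + 1) R
  have hsplit := length_filter_split u R
  simp only [bkRow, List.length_append, List.length_replicate, ht, hs]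
  omega

end BkRow

def countLT (T : List (List ℕ)) (i v : ℕ) : ℕ := (T.getD i []).countP (· < v)

def ColumnsContain (T : List (List ℕ)) (v : ℕ) : Prop :=
  ∀ j < (T.getD 0 []).length, v ∈ col T j

section Tableau

variable {T : List (List ℕ)} {u : ℕ}

lemma countLT_le_succ (T : List (List ℕ)) (i v : ℕ) : countLT T i v ≤ countLT T i (v + 1) :=
  List.countP_mono_left fun x _ hx => by
    simp only [decide_eq_true_eq] at hx ⊢
    omega

lemma IsSSYT.pairwise_getD (hT : IsSSYT T) (i : ℕ) : (T.getD i []).Pairwise (· ≤ ·) := by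
  by_cases hi : i < T.length
  · exact hT.1 _ (List.getD_eq_getElem _ _ hi ▸ List.getElem_mem hi)
  · rw [List.getD_eq_default _ _ (not_lt.1 hi)]
    exact List.Pairwise.nil

lemma IsSSYT.countLT_succ_le (hT : IsSSYT T) (i v : ℕ) :
    countLT T (i + 1) (v + 1) ≤ countLT T i v :=
  countP_lt_succ_le_of_getElem?_lt (hT.pairwise_getD i) (hT.pairwise_getD (i + 1)) (hT.2.1 i)
    (hT.2.2.1 i) v

lemma IsSSYT.countLT_succ_le_of_lt (hT : IsSSYT T) {i k : ℕ} (h : i < k) (v : ℕ) :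
    countLT T k (v + 1) ≤ countLT T i v := by
  induction k, h using Nat.le_induction with
  | base => exact hT.countLT_succ_le i v
  | succ k _ ih => exact (hT.countLT_succ_le k v).trans ((countLT_le_succ T k v).trans ih)

lemma IsSSYT.countLT_le_length_zero (hT : IsSSYT T) (i v : ℕ) :
    countLT T i v ≤ (T.getD 0 []).length :=
  List.countP_le_length.trans
    (antitone_nat_of_succ_le (f := fun i => (T.getD i []).length) hT.2.1 (Nat.zero_le i))

lemma IsSSYT.mem_col_iff (hT : IsSSYT T) {j v : ℕ} :
    v ∈ col T j ↔ ∃ i, countLT T i v ≤ j ∧ j < countLT T i (v + 1) := by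
  simp only [col, List.mem_filterMap, countLT, ← getElem?_eq_some_iff_countP (hT.pairwise_getD _)]
  constructor
  · rintro ⟨r, hr, hrj⟩
    obtain ⟨i, hi, rfl⟩ := List.getElem_of_mem hr
    exact ⟨i, by rwa [List.getD_eq_getElem _ _ hi]⟩
  · rintro ⟨i, hij⟩
    have hi : i < T.length := by
      by_contra h
      rw [List.getD_eq_default _ _ (not_lt.1 h)] at hij
      simp at hij
    exact ⟨_, List.getElem_mem hi, by rwa [← List.getD_eq_getElem _ [] hi]⟩

lemma getD_bk (T : List (List ℕ)) (i : ℕ) :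
    (bk u T).getD i [] =
      bkRow u (if i = 0 then [] else T.getD (i - 1) []) (T.getD (i + 1) []) (T.getD i []) := by
  by_cases hi : i < T.length
  · simp [bk, hi]
  · rw [List.getD_eq_default _ _ (by simpa [bk] using hi),
      List.getD_eq_default _ _ (not_lt.1 hi)]
    simp [bkRow]

lemma IsSSYT.pairwise_above (hT : IsSSYT T) (i : ℕ) :
    (if i = 0 then [] else T.getD (i - 1) []).Pairwise (· ≤ ·) := by
  split
  · exact List.Pairwise.nil
  · exact hT.pairwise_getD _

lemma IsSSYT.length_getD_bk (hT : IsSSYT T) (i : ℕ) :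
    ((bk u T).getD i []).length = (T.getD i []).length := by
  rw [getD_bk, length_bkRow (hT.pairwise_getD i) (hT.pairwise_above i) (hT.pairwise_getD _)]

lemma IsSSYT.map_length_bk (hT : IsSSYT T) : (bk u T).map List.length = T.map List.length := by
  refine List.ext_getElem (by simp [bk]) fun i h₁ h₂ => ?_
  simp only [List.getElem_map]
  rw [← List.getD_eq_getElem _ [], ← List.getD_eq_getElem _ [], hT.length_getD_bk]

lemma IsSSYT.countLT_bk_of_ne (hT : IsSSYT T) (i : ℕ) {v : ℕ} (hv : v ≠ u + 1) :
    countLT (bk u T) i v = countLT T i v := by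
  rw [countLT, getD_bk, countP_lt_bkRow (hT.pairwise_getD i) (hT.pairwise_above i)
    (hT.pairwise_getD _), if_neg hv, countLT]

lemma IsSSYT.countLT_bk_succ (hT : IsSSYT T) (i : ℕ) :
    countLT (bk u T) i (u + 1) =
      max (countLT T i u) (countLT T (i + 1) (u + 2)) +
        ((if i = 0 then countLT T i (u + 2) else min (countLT T i (u + 2)) (countLT T (i - 1) u)) -
          countLT T i (u + 1)) := by
  have h₁ := hT.countLT_succ_le i u
  have h₂ : countLT T (i + 1) (u + 2) ≤ countLT T i (u + 1) := hT.countLT_succ_le i (u + 1)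
  have h₃ := countLT_le_succ T i u
  have h₄ : countLT T i (u + 1) ≤ countLT T i (u + 2) := countLT_le_succ T i (u + 1)
  rw [countLT, getD_bk, countP_lt_bkRow (hT.pairwise_getD i) (hT.pairwise_above i)
    (hT.pairwise_getD _), if_pos rfl]
  rcases i with _ | i
  · simp only [countLT] at *
    simp only [↓reduceIte, List.countP_nil]
    omega
  · have h₅ := hT.countLT_succ_le i u
    have h₆ : countLT T (i + 1) (u + 2) ≤ countLT T i (u + 1) := hT.countLT_succ_le i (u + 1)
    simp only [countLT] at *
    simp only [Nat.add_one_ne_zero, if_false, Nat.add_sub_cancel]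
    omega

lemma isSSYT_bk_of_countLT_le (hT : IsSSYT T)
    (h₁ : ∀ i, countLT (bk u T) (i + 1) (u + 1) ≤ countLT T i u)
    (h₂ : ∀ i, countLT T (i + 1) (u + 2) ≤ countLT (bk u T) i (u + 1)) : IsSSYT (bk u T) := by
  have hsort : ∀ i, ((bk u T).getD i []).Pairwise (· ≤ ·) := fun i => by
    rw [getD_bk]
    exact pairwise_bkRow (hT.pairwise_getD i)
  have hrow : ∀ r ∈ bk u T, ∃ i < T.length, (bk u T).getD i [] = r := fun r hr => by
    obtain ⟨i, hi, rfl⟩ := List.getElem_of_mem hr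
    exact ⟨i, by simpa [bk] using hi, List.getD_eq_getElem _ _ hi⟩
  refine ⟨fun r hr => ?_, fun i => ?_, fun i j x y hx hy => ?_, fun r hr => ?_⟩
  · obtain ⟨i, -, rfl⟩ := hrow r hr
    exact hsort i
  · rw [hT.length_getD_bk, hT.length_getD_bk]
    exact hT.2.1 i
  · refine lt_of_countP_lt_succ_le (hsort i) (hsort (i + 1)) (fun v => ?_) hx hy
    change countLT (bk u T) (i + 1) (v + 1) ≤ countLT (bk u T) i v
    by_cases hv : v = u
    · subst hv
      rw [hT.countLT_bk_of_ne i (by omega)]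
      exact h₁ i
    by_cases hv' : v = u + 1
    · subst hv'
      rw [hT.countLT_bk_of_ne (i + 1) (by omega)]
      exact h₂ i
    rw [hT.countLT_bk_of_ne (i + 1) (by omega), hT.countLT_bk_of_ne i hv']
    exact hT.countLT_succ_le i v
  · obtain ⟨i, hi, rfl⟩ := hrow r hr
    rw [← List.length_pos_iff, hT.length_getD_bk, List.length_pos_iff]
    exact hT.2.2.2 _ (List.getD_eq_getElem _ _ hi ▸ List.getElem_mem hi)

lemma IsSSYT.bk_bk_eq (hT : IsSSYT T) (hT' : IsSSYT (bk u T))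
    (h : ∀ i, countLT (bk u (bk u T)) i (u + 1) = countLT T i (u + 1)) : bk u (bk u T) = T := by
  have hrow : ∀ i, (bk u (bk u T)).getD i [] = T.getD i [] := fun i => by
    refine eq_of_countP_lt_eq (getD_bk (bk u T) i ▸ pairwise_bkRow (hT'.pairwise_getD i))
      (hT.pairwise_getD i) fun v => ?_
    change countLT (bk u (bk u T)) i v = countLT T i v
    by_cases hv : v = u + 1
    · exact hv ▸ h i
    · rw [hT'.countLT_bk_of_ne i hv, hT.countLT_bk_of_ne i hv]
  refine List.ext_getElem (by simp [bk]) fun i h₁ h₂ => ?_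
  rw [← List.getD_eq_getElem _ [] h₁, ← List.getD_eq_getElem _ [] h₂, hrow]

lemma entries_bk_bounded {m : ℕ} (hb : ∀ r ∈ T, ∀ x ∈ r, 1 ≤ x ∧ x ≤ m)
    (hu : 1 ≤ u) (hum : u < m) :
    ∀ r ∈ bk u T, ∀ x ∈ r, 1 ≤ x ∧ x ≤ m := by
  intro r hr x hx
  obtain ⟨i, hi, rfl⟩ : ∃ i < T.length, bkRow u (if i = 0 then [] else T.getD (i - 1) [])
      (T.getD (i + 1) []) (T.getD i []) = r := by simpa [bk] using hr
  rcases mem_bkRow hx with hx | rfl | rfl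
  · exact hb _ (List.getD_eq_getElem _ _ hi ▸ List.getElem_mem hi) x hx
  · omega
  · omega

end Tableau

section ColumnsContain

variable {T : List (List ℕ)} {u : ℕ}

lemma exists_eq_succ_of_columnsContain (hT : IsSSYT T) (hcol : ColumnsContain T u)
    {i j : ℕ}
    (h₁ : countLT T i (u + 1) ≤ j) (h₂ : j < countLT T i (u + 2)) :
    ∃ k, i = k + 1 ∧ countLT T k u ≤ j ∧ j < countLT T k (u + 1) := by
  obtain ⟨k, hk₁, hk₂⟩ :=
    hT.mem_col_iff.1 (hcol j (h₂.trans_le (hT.countLT_le_length_zero i _)))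
  refine ⟨k, ?_, hk₁, hk₂⟩
  rcases lt_trichotomy i (k + 1) with h | h | h
  · have : countLT T k (u + 1) ≤ countLT T i (u + 1) := by
      rcases Nat.lt_or_ge i k with h' | h'
      · exact (hT.countLT_succ_le_of_lt h' u).trans (countLT_le_succ T i u)
      · rw [show k = i by omega]
    omega
  · exact h
  · have : countLT T i (u + 2) ≤ countLT T (k + 1) (u + 1) := hT.countLT_succ_le_of_lt h (u + 1)
    have := hT.countLT_succ_le k u
    omega

lemma countLT_zero_eq_of_columnsContain (hT : IsSSYT T) (hcol : ColumnsContain T u) :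
    countLT T 0 (u + 2) = countLT T 0 (u + 1) := by
  by_contra h
  have : countLT T 0 (u + 1) ≤ countLT T 0 (u + 2) := countLT_le_succ T 0 (u + 1)
  obtain ⟨k, hk, -⟩ := exists_eq_succ_of_columnsContain hT hcol (i := 0) le_rfl (by omega)
  omega

lemma countLT_succ_eq_or_of_columnsContain (hT : IsSSYT T) (hcol : ColumnsContain T u) (i : ℕ) :
    countLT T (i + 1) (u + 2) = countLT T (i + 1) (u + 1) ∨
      countLT T (i + 1) (u + 1) = countLT T i u := by
  by_contra! h
  have : countLT T (i + 1) (u + 1) ≤ countLT T (i + 1) (u + 2) :=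
    countLT_le_succ T (i + 1) (u + 1)
  obtain ⟨k, hk, hk₁, -⟩ := exists_eq_succ_of_columnsContain hT hcol (i := i + 1) le_rfl
    (by omega)
  obtain rfl : k = i := by omega
  have := hT.countLT_succ_le k u
  omega

lemma countLT_bk_succ_of_columnsContain (hT : IsSSYT T) (hcol : ColumnsContain T u) (i : ℕ) :
    countLT (bk u T) i (u + 1) =
      countLT T i u + (countLT T (i + 1) (u + 2) - countLT T (i + 1) (u + 1)) := by
  have h₁ := hT.countLT_succ_le i u
  have h₂ := countLT_succ_eq_or_of_columnsContain hT hcol i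
  rw [hT.countLT_bk_succ]
  rcases i with _ | i
  · have := countLT_zero_eq_of_columnsContain hT hcol
    simp only [↓reduceIte]
    omega
  · have := countLT_succ_eq_or_of_columnsContain hT hcol i
    have := hT.countLT_succ_le i u
    have : countLT T (i + 1) (u + 1) ≤ countLT T (i + 1) (u + 2) :=
      countLT_le_succ T (i + 1) (u + 1)
    simp only [Nat.add_one_ne_zero, if_false, Nat.add_sub_cancel]
    omega

lemma countLT_bk_succ_le_of_columnsContain (hT : IsSSYT T) (hcol : ColumnsContain T u) (i : ℕ) :
    countLT (bk u T) (i + 1) (u + 1) ≤ countLT T i u := by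
  have := countLT_succ_eq_or_of_columnsContain hT hcol (i + 1)
  have := hT.countLT_succ_le i u
  have : countLT T (i + 1 + 1) (u + 2) ≤ countLT T (i + 1) (u + 1) :=
    hT.countLT_succ_le (i + 1) (u + 1)
  have := countLT_le_succ T (i + 1) u
  rw [countLT_bk_succ_of_columnsContain hT hcol]
  omega

lemma isSSYT_bk_of_columnsContain (hT : IsSSYT T) (hcol : ColumnsContain T u) : IsSSYT (bk u T) :=
  isSSYT_bk_of_countLT_le hT (countLT_bk_succ_le_of_columnsContain hT hcol) fun i => by
    have := hT.countLT_succ_le i u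
    rw [countLT_bk_succ_of_columnsContain hT hcol]
    omega

lemma columnsContain_bk_of_columnsContain (hT : IsSSYT T) (hcol : ColumnsContain T u) :
    ColumnsContain (bk u T) (u + 1) := by
  intro j hj
  rw [hT.length_getD_bk] at hj
  obtain ⟨i, hi₁, hi₂⟩ := hT.mem_col_iff.1 (hcol j hj)
  rw [(isSSYT_bk_of_columnsContain hT hcol).mem_col_iff, show u + 1 + 1 = u + 2 from rfl]
  have hb := countLT_bk_succ_of_columnsContain hT hcol i
  have : countLT T i (u + 1) ≤ countLT T i (u + 2) := countLT_le_succ T i (u + 1)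
  by_cases h : countLT (bk u T) i (u + 1) ≤ j
  · exact ⟨i, h, by rw [hT.countLT_bk_of_ne i (by omega)]; omega⟩
  · refine ⟨i + 1, (countLT_bk_succ_le_of_columnsContain hT hcol i).trans hi₁, ?_⟩
    rw [hT.countLT_bk_of_ne (i + 1) (by omega)]
    have := countLT_succ_eq_or_of_columnsContain hT hcol i
    omega

lemma countLT_succ_le_and_lt_of_columnsContain_succ (hT : IsSSYT T)
    (hcol : ColumnsContain T (u + 1)) {i j : ℕ}
    (h₁ : countLT T i u ≤ j) (h₂ : j < countLT T i (u + 1)) :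
    countLT T (i + 1) (u + 1) ≤ j ∧ j < countLT T (i + 1) (u + 2) := by
  obtain ⟨k, hk₁, hk₂⟩ :=
    hT.mem_col_iff.1 (hcol j (h₂.trans_le (hT.countLT_le_length_zero i _)))
  rw [show u + 1 + 1 = u + 2 from rfl] at hk₂
  rcases lt_trichotomy k (i + 1) with h | rfl | h
  · have : countLT T i (u + 1) ≤ countLT T k (u + 1) := by
      rcases Nat.lt_or_ge k i with h' | h'
      · exact (countLT_le_succ T i (u + 1)).trans (hT.countLT_succ_le_of_lt h' (u + 1))
      · rw [show k = i by omega]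
    omega
  · exact ⟨hk₁, hk₂⟩
  · have : countLT T k (u + 2) ≤ countLT T (i + 1) (u + 1) := hT.countLT_succ_le_of_lt h (u + 1)
    have := hT.countLT_succ_le i u
    omega

lemma countLT_eq_or_of_columnsContain_succ (hT : IsSSYT T)
    (hcol : ColumnsContain T (u + 1)) (i : ℕ) :
    countLT T i u = countLT T i (u + 1) ∨ countLT T i (u + 1) = countLT T (i + 1) (u + 2) := by
  by_contra! h
  have := countLT_le_succ T i u
  have : countLT T (i + 1) (u + 2) ≤ countLT T i (u + 1) := hT.countLT_succ_le i (u + 1)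
  have := (countLT_succ_le_and_lt_of_columnsContain_succ hT hcol (i := i)
    (j := countLT T i (u + 1) - 1) (by omega) (by omega)).2
  omega

lemma countLT_bk_succ_of_columnsContain_succ (hT : IsSSYT T)
    (hcol : ColumnsContain T (u + 1)) (i : ℕ) :
    countLT (bk u T) i (u + 1) =
      countLT T i (u + 2) -
        (if i = 0 then 0 else countLT T (i - 1) (u + 1) - countLT T (i - 1) u) := by
  have := countLT_eq_or_of_columnsContain_succ hT hcol i
  have := countLT_le_succ T i u
  have : countLT T i (u + 1) ≤ countLT T i (u + 2) := countLT_le_succ T i (u + 1)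
  have : countLT T (i + 1) (u + 2) ≤ countLT T i (u + 1) := hT.countLT_succ_le i (u + 1)
  rw [hT.countLT_bk_succ]
  rcases i with _ | i
  · simp only [↓reduceIte]
    omega
  · have := countLT_eq_or_of_columnsContain_succ hT hcol i
    have := hT.countLT_succ_le i u
    have : countLT T (i + 1) (u + 2) ≤ countLT T i (u + 1) := hT.countLT_succ_le i (u + 1)
    simp only [Nat.add_one_ne_zero, if_false, Nat.add_sub_cancel]
    omega

lemma countLT_bk_succ_le_of_columnsContain_succ (hT : IsSSYT T)
    (hcol : ColumnsContain T (u + 1)) (i : ℕ) :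
    countLT (bk u T) (i + 1) (u + 1) ≤ countLT T i u := by
  have := countLT_eq_or_of_columnsContain_succ hT hcol i
  have : countLT T (i + 1) (u + 2) ≤ countLT T i (u + 1) := hT.countLT_succ_le i (u + 1)
  rw [countLT_bk_succ_of_columnsContain_succ hT hcol]
  simp only [Nat.add_one_ne_zero, if_false, Nat.add_sub_cancel]
  omega

lemma countLT_le_countLT_bk_of_columnsContain_succ (hT : IsSSYT T)
    (hcol : ColumnsContain T (u + 1)) (i : ℕ) :
    countLT T i (u + 1) ≤ countLT (bk u T) i (u + 1) := by
  have : countLT T i (u + 1) ≤ countLT T i (u + 2) := countLT_le_succ T i (u + 1)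
  rw [countLT_bk_succ_of_columnsContain_succ hT hcol]
  rcases i with _ | i
  · simpa using this
  · have := countLT_eq_or_of_columnsContain_succ hT hcol i
    have := hT.countLT_succ_le i u
    simp only [Nat.add_one_ne_zero, if_false, Nat.add_sub_cancel]
    omega

lemma isSSYT_bk_of_columnsContain_succ (hT : IsSSYT T)
    (hcol : ColumnsContain T (u + 1)) : IsSSYT (bk u T) :=
  isSSYT_bk_of_countLT_le hT (countLT_bk_succ_le_of_columnsContain_succ hT hcol) fun i =>
    (hT.countLT_succ_le i (u + 1)).trans (countLT_le_countLT_bk_of_columnsContain_succ hT hcol i)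

lemma columnsContain_bk_of_columnsContain_succ (hT : IsSSYT T)
    (hcol : ColumnsContain T (u + 1)) :
    ColumnsContain (bk u T) u := by
  intro j hj
  rw [hT.length_getD_bk] at hj
  obtain ⟨i, hi₁, hi₂⟩ := hT.mem_col_iff.1 (hcol j hj)
  rw [show u + 1 + 1 = u + 2 from rfl] at hi₂
  rw [(isSSYT_bk_of_columnsContain_succ hT hcol).mem_col_iff]
  have hb := countLT_bk_succ_of_columnsContain_succ hT hcol i
  by_cases h : j < countLT (bk u T) i (u + 1)
  · have := countLT_le_succ T i u
    exact ⟨i, by rw [hT.countLT_bk_of_ne i (by omega)]; omega, h⟩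
  · rcases i with _ | i
    · simp only [↓reduceIte, tsub_zero] at hb
      omega
    · refine ⟨i, ?_, (countLT_le_countLT_bk_of_columnsContain_succ hT hcol i).trans_lt' ?_⟩
      · have := countLT_eq_or_of_columnsContain_succ hT hcol i
        rw [hT.countLT_bk_of_ne i (by omega)]
        simp only [Nat.add_one_ne_zero, if_false, Nat.add_sub_cancel] at hb
        omega
      · have := countLT_eq_or_of_columnsContain_succ hT hcol i
        simp only [Nat.add_one_ne_zero, if_false, Nat.add_sub_cancel] at hb
        omega

lemma bk_bk_of_columnsContain (hT : IsSSYT T) (hcol : ColumnsContain T u) :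
    bk u (bk u T) = T := by
  have hT' := isSSYT_bk_of_columnsContain hT hcol
  refine hT.bk_bk_eq hT' fun i => ?_
  rw [countLT_bk_succ_of_columnsContain_succ hT' (columnsContain_bk_of_columnsContain hT hcol),
    hT.countLT_bk_of_ne i (by omega)]
  rcases i with _ | i
  · simpa using countLT_zero_eq_of_columnsContain hT hcol
  · have : countLT T (i + 1) (u + 1) ≤ countLT T (i + 1) (u + 2) :=
      countLT_le_succ T (i + 1) (u + 1)
    simp only [Nat.add_one_ne_zero, if_false, Nat.add_sub_cancel]
    rw [countLT_bk_succ_of_columnsContain hT hcol, hT.countLT_bk_of_ne i (by omega)]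
    omega

lemma bk_bk_of_columnsContain_succ (hT : IsSSYT T)
    (hcol : ColumnsContain T (u + 1)) : bk u (bk u T) = T := by
  have hT' := isSSYT_bk_of_columnsContain_succ hT hcol
  refine hT.bk_bk_eq hT' fun i => ?_
  rw [countLT_bk_succ_of_columnsContain hT' (columnsContain_bk_of_columnsContain_succ hT hcol),
    hT.countLT_bk_of_ne i (by omega), hT.countLT_bk_of_ne (i + 1) (by omega),
    countLT_bk_succ_of_columnsContain_succ hT hcol (i + 1)]
  have := countLT_eq_or_of_columnsContain_succ hT hcol i
  have := countLT_le_succ T i u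
  simp only [Nat.add_one_ne_zero, if_false, Nat.add_sub_cancel]
  omega

end ColumnsContain

lemma bk_mem_colSet_succ {m u : ℕ} {T : List (List ℕ)} (hu : 1 ≤ u) (hum : u < m)
    (hT : T ∈ ColSet m u) : bk u T ∈ ColSet m (u + 1) :=
  ⟨isSSYT_bk_of_columnsContain hT.1 hT.2.2, entries_bk_bounded hT.2.1 hu hum,
    columnsContain_bk_of_columnsContain hT.1 hT.2.2⟩

lemma bk_mem_colSet_of_succ {m u : ℕ} {T : List (List ℕ)} (hu : 1 ≤ u) (hum : u < m)
    (hT : T ∈ ColSet m (u + 1)) : bk u T ∈ ColSet m u :=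
  ⟨isSSYT_bk_of_columnsContain_succ hT.1 hT.2.2, entries_bk_bounded hT.2.1 hu hum,
    columnsContain_bk_of_columnsContain_succ hT.1 hT.2.2⟩

end Plactic

open Plactic in
theorem stmt_15 (m u : ℕ) (hu : 1 ≤ u) (hum : u < m) :
    Set.BijOn (bk u) (ColSet m u) (ColSet m (u + 1)) ∧
    ∀ T ∈ ColSet m u, (bk u T).map List.length = T.map List.length :=
  ⟨Set.InvOn.bijOn
      ⟨fun _ hT => bk_bk_of_columnsContain hT.1 hT.2.2,
        fun _ hT => bk_bk_of_columnsContain_succ hT.1 hT.2.2⟩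
      (fun _ => bk_mem_colSet_succ hu hum) (fun _ => bk_mem_colSet_of_succ hu hum),
    fun _ hT => hT.1.map_length_bk⟩
end

section
/- The number of Yamanouchi words of length n over the alphabet {1,2} is the central binomial coefficient C(n, ⌊n/2⌋). -/
/-!
Count instead the Yamanouchi words of length `n` with at most `m` letters `2`, for `2m ≤ n`.
Splitting off the first letter, such a word is `1 :: t` with `t` of the same kind, or `2 :: t`
with `t` having at most `m - 1` letters `2`; the constraint `2m ≤ n` makes the whole-word
condition on `2 :: t` automatic. Hence these counts satisfy Pascal's recurrence and equal
`C(n, m)`. In the boundary case `n = 2m` a Yamanouchi word of length `n - 1` has at most `m - 1`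
letters `2`, so the first summand is `C(n - 1, m - 1) = C(n - 1, m)`. A Yamanouchi word of
length `n` has at most `⌊n/2⌋` letters `2`, so `m = ⌊n/2⌋` gives the theorem.
-/

def IsYamanouchi (w : List ℕ) : Prop :=
  ∀ s : List ℕ, s <:+ w → s.count 2 ≤ s.count 1

theorem isYamanouchi_nil : IsYamanouchi [] := by
  intro s hs
  simp [List.suffix_nil.mp hs]

theorem isYamanouchi_cons {x : ℕ} {t : List ℕ} :
    IsYamanouchi (x :: t) ↔ (x :: t).count 2 ≤ (x :: t).count 1 ∧ IsYamanouchi t := by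
  constructor
  · intro h
    exact ⟨h _ (List.suffix_refl _), fun s hs => h s (hs.trans (List.suffix_cons x t))⟩
  · rintro ⟨hw, ht⟩ s hs
    rcases List.suffix_cons_iff.mp hs with rfl | hs
    · exact hw
    · exact ht s hs

theorem count_one_add_count_two {w : List ℕ} (hw : ∀ x ∈ w, x = 1 ∨ x = 2) :
    w.count 1 + w.count 2 = w.length := by
  induction w with
  | nil => rfl
  | cons x t ih =>
    have ht := ih fun y hy => hw y (List.mem_cons_of_mem x hy)
    rcases hw x List.mem_cons_self with rfl | rfl <;> simp <;> omega

theorem IsYamanouchi.two_mul_count_two_le_length {w : List ℕ} (hy : IsYamanouchi w)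
    (hw : ∀ x ∈ w, x = 1 ∨ x = 2) : 2 * w.count 2 ≤ w.length := by
  have := hy w (List.suffix_refl w)
  have := count_one_add_count_two hw
  omega

def yamanouchiWords (n m : ℕ) : Set (List ℕ) :=
  {w | w.length = n ∧ (∀ x ∈ w, x = 1 ∨ x = 2) ∧ IsYamanouchi w ∧ w.count 2 ≤ m}

theorem yamanouchiWords_zero_zero : yamanouchiWords 0 0 = {[]} := by
  ext w
  simp only [yamanouchiWords, Set.mem_ofPred_eq, Set.mem_singleton_iff, List.length_eq_zero_iff]
  constructor
  · exact fun h => h.1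
  · rintro rfl
    exact ⟨rfl, by simp, isYamanouchi_nil, le_rfl⟩

theorem cons_mem_image_cons {α : Type*} {x y : α} {t : List α} {S : Set (List α)} :
    x :: t ∈ (y :: ·) '' S ↔ x = y ∧ t ∈ S := by
  constructor
  · rintro ⟨u, hu, h⟩
    obtain ⟨rfl, rfl⟩ := List.cons.inj h
    exact ⟨rfl, hu⟩
  · rintro ⟨rfl, ht⟩
    exact ⟨t, ht, rfl⟩

theorem yamanouchiWords_succ_zero (n : ℕ) :
    yamanouchiWords (n + 1) 0 = (1 :: ·) '' yamanouchiWords n 0 := by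
  ext (_ | ⟨x, t⟩)
  · simp [yamanouchiWords]
  · simp only [cons_mem_image_cons, yamanouchiWords, Set.mem_ofPred_eq, isYamanouchi_cons,
      List.mem_cons, forall_eq_or_imp, List.length_cons]
    constructor
    · rintro ⟨hl, ⟨rfl | rfl, ha⟩, ⟨-, hy⟩, hc⟩ <;> simp_all
    · rintro ⟨rfl, hl, ha, hy, hc⟩
      simp_all

theorem yamanouchiWords_succ_succ {n m : ℕ} (h : 2 * (m + 1) ≤ n + 1) :
    yamanouchiWords (n + 1) (m + 1) =
      (1 :: ·) '' yamanouchiWords n (m + 1) ∪ (2 :: ·) '' yamanouchiWords n m := by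
  ext (_ | ⟨x, t⟩)
  · simp [yamanouchiWords]
  · simp only [Set.mem_union, cons_mem_image_cons, yamanouchiWords, Set.mem_ofPred_eq,
      isYamanouchi_cons, List.mem_cons, forall_eq_or_imp, List.length_cons]
    constructor
    · rintro ⟨hl, ⟨rfl | rfl, ha⟩, ⟨-, hy⟩, hc⟩ <;> simp_all
    · rintro (⟨rfl, hl, ha, hy, hc⟩ | ⟨rfl, hl, ha, hy, hc⟩)
      · have := hy t (List.suffix_refl t)
        simp_all
        omega
      · have := count_one_add_count_two ha
        simp_all
        omega

theorem yamanouchiWords_eq_of_length_le {n m : ℕ} (h : n ≤ 2 * m + 1) :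
    yamanouchiWords n (m + 1) = yamanouchiWords n m := by
  ext w
  simp only [yamanouchiWords, Set.mem_ofPred_eq]
  constructor
  · rintro ⟨rfl, ha, hy, -⟩
    exact ⟨rfl, ha, hy, by have := hy.two_mul_count_two_le_length ha; omega⟩
  · rintro ⟨hl, ha, hy, hc⟩
    exact ⟨hl, ha, hy, by omega⟩

theorem encard_yamanouchiWords {n m : ℕ} (h : 2 * m ≤ n) :
    (yamanouchiWords n m).encard = n.choose m := by
  induction n generalizing m with
  | zero =>
    obtain rfl : m = 0 := by omega
    simp [yamanouchiWords_zero_zero]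
  | succ n ih =>
    cases m with
    | zero =>
      rw [yamanouchiWords_succ_zero, List.cons_injective.encard_image, ih (by omega)]
      simp
    | succ m =>
      have hdisj : Disjoint ((1 :: ·) '' yamanouchiWords n (m + 1))
          ((2 :: ·) '' yamanouchiWords n m) := by
        rw [Set.disjoint_left]
        rintro _ ⟨u, -, rfl⟩ ⟨v, -, h⟩
        simp at h
      rw [yamanouchiWords_succ_succ h, Set.encard_union_eq hdisj,
        List.cons_injective.encard_image, List.cons_injective.encard_image,
        ih (m := m) (by omega), Nat.choose_succ_succ', Nat.cast_add, add_comm]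
      rcases Nat.lt_or_ge n (2 * (m + 1)) with hn | hn
      · have hsymm : n.choose (m + 1) = n.choose m := by
          rw [Nat.choose_symm_of_eq_add]; omega
        rw [yamanouchiWords_eq_of_length_le (by omega), ih (by omega), hsymm]
      · rw [ih hn]

theorem stmt_17 (n : ℕ) :
    {w : List ℕ | w.length = n ∧ (∀ x ∈ w, x = 1 ∨ x = 2) ∧
        ∀ s : List ℕ, s.IsSuffix w → s.count 2 ≤ s.count 1}.ncard =
      Nat.choose n (n / 2) := by
  have hset : {w : List ℕ | w.length = n ∧ (∀ x ∈ w, x = 1 ∨ x = 2) ∧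
      ∀ s : List ℕ, s.IsSuffix w → s.count 2 ≤ s.count 1} = yamanouchiWords n (n / 2) := by
    ext w
    simp only [yamanouchiWords, Set.mem_ofPred_eq]
    constructor
    · rintro ⟨rfl, ha, hy⟩
      exact ⟨rfl, ha, hy, by have := IsYamanouchi.two_mul_count_two_le_length hy ha; omega⟩
    · exact fun ⟨hl, ha, hy, _⟩ => ⟨hl, ha, hy⟩
  rw [hset, Set.ncard_def, encard_yamanouchiWords (by omega), ENat.toNat_natCast]
end
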